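/- arXiv:1003.5617 — 3 statements merged into one kernel-verified Lean document; each statement's English description precedes it below -/
import Mathlib

section
/- Let δ: M → P be a crossed module of groups and a ∈ P. Then P(a) = {(m,p) ∈ M × P | δ(m) = [a,p]} with operation (n,q)+(m,p) = (m + n^p, q + p) is a group: the operation is associative, (0,0) is an identity element, and every element (m,p) has inverse (-m^{-p}, -p). -/
/-- A crossed module of groups: groups `M`, `P` (written multiplicatively here,
translating the paper's additive notation), a homomorphism `δ : M →* P`, and a
right action of `P` on `M` by group endomorphisms (automorphisms, by
invertibility of the action), satisfying CM1 and CM2. -/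
structure CrossedModule (M P : Type*) [Group M] [Group P] where
  δ : M →* P
  act : P → M →* M
  act_one : ∀ m : M, act 1 m = m
  act_mul : ∀ (p q : P) (m : M), act (p * q) m = act q (act p m)
  cm1 : ∀ (p : P) (m : M), δ (act p m) = p⁻¹ * δ m * p
  cm2 : ∀ m n : M, n⁻¹ * m * n = act (δ n) m

/-! The operations are those of a semidirect product `M ⋊ P` for the right action, so the group
laws hold on all of `M × P`; only closure of `P(a)` uses the crossed module axioms. By CM1,
`δ (n * m^q) = δ n * q⁻¹ * δ m * q`, and the commutator `[a, p] = a⁻¹ * p⁻¹ * a * p` obeys the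
same rule `[a, p * q] = [a, q] * q⁻¹ * [a, p] * q`. -/

namespace CrossedModule

variable {M P : Type*} [Group M] [Group P] (C : CrossedModule M P)

theorem act_act (p q : P) (m : M) : C.act q (C.act p m) = C.act (p * q) m :=
  (C.act_mul p q m).symm

/-- The paper's `(n, q) + (m, p) = (m + n^p, q + p)`. -/
def pairMul (x y : M × P) : M × P := (y.1 * C.act y.2 x.1, x.2 * y.2)

/-- The paper's `-(m, p) = (-m^{-p}, -p)`. -/
def pairInv (x : M × P) : M × P := ((C.act x.2⁻¹ x.1)⁻¹, x.2⁻¹)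

/-- The paper's `P(a)`. -/
def commutatorLifts (a : P) : Set (M × P) := {x | C.δ x.1 = a⁻¹ * x.2⁻¹ * a * x.2}

theorem pairMul_assoc (x y z : M × P) :
    C.pairMul (C.pairMul x y) z = C.pairMul x (C.pairMul y z) := by
  simp only [pairMul, map_mul, act_act, mul_assoc]

theorem pairMul_one (x : M × P) : C.pairMul x (1, 1) = x := by
  simp [pairMul, act_one]

theorem one_pairMul (x : M × P) : C.pairMul (1, 1) x = x := by
  simp [pairMul]

theorem pairMul_pairInv (x : M × P) : C.pairMul x (C.pairInv x) = (1, 1) := by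
  simp [pairMul, pairInv]

theorem pairInv_pairMul (x : M × P) : C.pairMul (C.pairInv x) x = (1, 1) := by
  simp [pairMul, pairInv, act_act, act_one]

theorem one_mem_commutatorLifts (a : P) : ((1 : M), (1 : P)) ∈ C.commutatorLifts a := by
  simp [commutatorLifts]

theorem pairMul_mem_commutatorLifts {a : P} {x y : M × P} (hx : x ∈ C.commutatorLifts a)
    (hy : y ∈ C.commutatorLifts a) : C.pairMul x y ∈ C.commutatorLifts a := by
  change C.δ x.1 = _ at hx
  change C.δ y.1 = _ at hy
  change C.δ (y.1 * C.act y.2 x.1) = a⁻¹ * (x.2 * y.2)⁻¹ * a * (x.2 * y.2)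
  rw [map_mul, C.cm1, hx, hy]
  group

theorem pairInv_mem_commutatorLifts {a : P} {x : M × P} (hx : x ∈ C.commutatorLifts a) :
    C.pairInv x ∈ C.commutatorLifts a := by
  change C.δ x.1 = _ at hx
  change C.δ (C.act x.2⁻¹ x.1)⁻¹ = a⁻¹ * x.2⁻¹⁻¹ * a * x.2⁻¹
  rw [map_inv, C.cm1, hx]
  group

end CrossedModule

/-- `P(a) = {(m,p) | δ m = [a,p]}` with `(n,q)+(m,p) = (m + n^p, q+p)`
is a group: associative, `(0,0)` is a (two-sided) identity, and `(m,p)` has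
inverse `(-m^{-p}, -p)`. -/
theorem Pa_is_group {M P : Type*} [Group M] [Group P]
    (C : CrossedModule M P) (a : P) :
    let mem : M × P → Prop := fun x => C.δ x.1 = a⁻¹ * x.2⁻¹ * a * x.2
    let op : M × P → M × P → M × P := fun x y => (y.1 * C.act y.2 x.1, x.2 * y.2)
    -- closure
    (∀ x y, mem x → mem y → mem (op x y)) ∧
    -- associativity
    (∀ x y z, mem x → mem y → mem z → op (op x y) z = op x (op y z)) ∧
    -- identity
    mem ((1 : M), (1 : P)) ∧
    (∀ x, mem x → op x ((1 : M), (1 : P)) = x ∧ op ((1 : M), (1 : P)) x = x) ∧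
    -- inverses
    (∀ x, mem x → mem ((C.act x.2⁻¹ x.1)⁻¹, x.2⁻¹) ∧
      op x ((C.act x.2⁻¹ x.1)⁻¹, x.2⁻¹) = ((1 : M), (1 : P)) ∧
      op ((C.act x.2⁻¹ x.1)⁻¹, x.2⁻¹) x = ((1 : M), (1 : P))) := by
  intro mem op
  exact ⟨fun _ _ => C.pairMul_mem_commutatorLifts, fun x y z _ _ _ => C.pairMul_assoc x y z,
    C.one_mem_commutatorLifts a, fun x _ => ⟨C.pairMul_one x, C.one_pairMul x⟩,
    fun x hx => ⟨C.pairInv_mem_commutatorLifts hx, C.pairMul_pairInv x, C.pairInv_pairMul x⟩⟩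
end

section
/- Let δ: M → P be a crossed module of groups and a ∈ P. For all (m,p) ∈ P(a) and n ∈ M: -(m,p) + δ_a(n) + (m,p) = δ_a(n^p) in the group P(a). (First crossed module rule for δ_a: M → P(a) with the action n^{(m,p)} := n^p.) -/
/-
Write `n^p` for `C.act p n`. Both sides have second component `-p + δ n + p = δ (n^p)` by CM1.
In the first components, CM2 turns the action of `δ n` into conjugation by `n`, and the whole
identity reduces to `n^(a+p) = -m + n^(p+a) + m`, which is CM2 again, because the defining
equation `δ m = -a - p + a + p` of `P(a)` says `a + p = (p + a) + δ m`.
-/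

namespace CrossedModule

variable {M P : Type*} [Group M] [Group P] (C : CrossedModule M P)

theorem act_act_inv (p : P) (m : M) : C.act p (C.act p⁻¹ m) = m := by
  rw [← C.act_mul, inv_mul_cancel, C.act_one]

theorem act_delta (n m : M) : C.act (C.δ n) m = n⁻¹ * m * n :=
  (C.cm2 m n).symm

theorem act_mul_eq_conj_of_delta_eq {a p : P} {m : M} (hm : C.δ m = a⁻¹ * p⁻¹ * a * p)
    (n : M) : C.act (a * p) n = m⁻¹ * C.act (p * a) n * m := by
  have hap : a * p = p * a * C.δ m := by rw [hm]; group
  rw [hap, C.act_mul, act_delta]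

end CrossedModule

/-- first crossed module rule for `δ_a : M → P(a)`:
`-(m,p) + δ_a(n) + (m,p) = δ_a(n^p)` for `(m,p) ∈ P(a)`, `n ∈ M`. -/
theorem delta_a_cm1 {M P : Type*} [Group M] [Group P]
    (C : CrossedModule M P) (a : P) (m n : M) (p : P)
    (hm : C.δ m = a⁻¹ * p⁻¹ * a * p) :
    let op : M × P → M × P → M × P := fun x y => (y.1 * C.act y.2 x.1, x.2 * y.2)
    let δa : M → M × P := fun m => ((C.act a m)⁻¹ * m, C.δ m)
    op (op ((C.act p⁻¹ m)⁻¹, p⁻¹) (δa n)) (m, p) = δa (C.act p n) := by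
  refine Prod.ext ?_ (C.cm1 p n).symm
  calc m * C.act p ((C.act a n)⁻¹ * n * C.act (C.δ n) (C.act p⁻¹ m)⁻¹)
      = m * (C.act (a * p) n)⁻¹ * m⁻¹ * C.act p n := by
        simp only [C.act_delta, map_mul, map_inv, C.act_act_inv, C.act_mul]
        group
    _ = (C.act (p * a) n)⁻¹ * C.act p n := by
        rw [C.act_mul_eq_conj_of_delta_eq hm]
        group
    _ = (C.act a (C.act p n))⁻¹ * C.act p n := by
        rw [C.act_mul]
end

section
/- Let δ: M → P be a crossed module of groups with δ = 0 and a ∈ P. Then the cokernel of δ_a: M → P(a) ≅ M ⋊ C_a(P) is isomorphic to (M/[a,M]) ⋊ C_a(P), where [a,M] denotes the subgroup of M generated by the elements -m^a + m for m ∈ M. -/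
variable {M P : Type*} [Group M] [Group P]

/-- The underlying set of the group `P(a) = {(m,p) | δ m = [a,p]}`. -/
def CrossedModule.Pa (C : CrossedModule M P) (a : P) : Type _ :=
  {x : M × P // C.δ x.1 = a⁻¹ * x.2⁻¹ * a * x.2}

/-- The operation `(n,q)+(m,p) = (m + n^p, q+p)` on `M × P`. -/
def CrossedModule.opP (C : CrossedModule M P) : M × P → M × P → M × P :=
  fun x y => (y.1 * C.act y.2 x.1, x.2 * y.2)

/-- `P(a)` is closed under the operation. -/
theorem CrossedModule.opP_mem (C : CrossedModule M P) (a : P)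
    (x y : M × P) (hx : C.δ x.1 = a⁻¹ * x.2⁻¹ * a * x.2)
    (hy : C.δ y.1 = a⁻¹ * y.2⁻¹ * a * y.2) :
    C.δ (C.opP x y).1 = a⁻¹ * (C.opP x y).2⁻¹ * a * (C.opP x y).2 := by
  simp only [CrossedModule.opP, map_mul, C.cm1, hx, hy]
  group

/-- The group operation of `P(a)`. -/
def CrossedModule.PaMul (C : CrossedModule M P) (a : P) (x y : C.Pa a) : C.Pa a :=
  ⟨C.opP x.1 y.1, C.opP_mem a x.1 y.1 x.2 y.2⟩

/-- The relation on `P(a)` whose classes are the cosets of the image of `δ_a`: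
`x ≈ y ↔ ∃ m, y = x + δ_a(m)`. -/
def CrossedModule.cokerRel (C : CrossedModule M P) (a : P) :
    C.Pa a → C.Pa a → Prop :=
  fun x y => ∃ m : M, y.1 = C.opP x.1 ((C.act a m)⁻¹ * m, C.δ m)

/-- The relation on `M × C_a(P)` whose classes are the cosets of
`[a,M] × {0}`, where `[a,M] = {-m^a + m | m ∈ M}`. -/
def CrossedModule.sdRel (C : CrossedModule M P) (a : P) :
    M × Subgroup.centralizer ({a} : Set P) →
      M × Subgroup.centralizer ({a} : Set P) → Prop :=
  fun z w => (∃ m : M, w.1 = ((C.act a m)⁻¹ * m) * z.1) ∧ w.2 = z.2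

/-!
When `δ` is trivial, CM2 makes `M` abelian, and the defining condition `δ m = [a,p]` of `P(a)`
just says that `p` commutes with `a`. So `P(a)` is `M × C_a(P)` with the semidirect-product
operation, and the image of `δ_a` is `[a,M] × 1`. Since every `p ∈ C_a(P)` maps `-m^a + m` to
`-(m^p)^a + m^p`, the subgroup `[a,M]` is `C_a(P)`-stable, so the operation descends to the
quotient `(M/[a,M]) ⋊ C_a(P)`.
-/

theorem inv_mul_inv_mul_mul_mul_eq_one_iff {G : Type*} [Group G] {a p : G} :
    a⁻¹ * p⁻¹ * a * p = 1 ↔ p ∈ Subgroup.centralizer ({a} : Set G) := by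
  rw [Subgroup.mem_centralizer_singleton_iff, show a⁻¹ * p⁻¹ * a * p = (p * a)⁻¹ * (a * p) by group,
    inv_mul_eq_one]

namespace CrossedModule

variable (C : CrossedModule M P) {a : P}

theorem mul_comm_of_delta_eq_one (hδ : ∀ m, C.δ m = 1) (m n : M) : m * n = n * m := by
  have h := C.cm2 m n
  rw [hδ, C.act_one] at h
  calc m * n = n * (n⁻¹ * m * n) := by group
    _ = n * m := by rw [h]

theorem act_act_of_mem_centralizer {p : P} (hp : p ∈ Subgroup.centralizer ({a} : Set P))
    (m : M) : C.act p (C.act a m) = C.act a (C.act p m) := by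
  rw [← C.act_mul, ← C.act_mul, Subgroup.mem_centralizer_singleton_iff.mp hp]

variable (a) in
def sdMul (z w : M × Subgroup.centralizer ({a} : Set P)) :
    M × Subgroup.centralizer ({a} : Set P) :=
  (w.1 * C.act w.2 z.1, z.2 * w.2)

theorem sdRel_sdMul_right (z w w' : M × Subgroup.centralizer ({a} : Set P))
    (h : C.sdRel a w w') : C.sdRel a (C.sdMul a z w) (C.sdMul a z w') := by
  obtain ⟨⟨m, hm⟩, h₂⟩ := h
  exact ⟨⟨m, by simp only [sdMul, hm, h₂, mul_assoc]⟩, by simp only [sdMul, h₂]⟩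

theorem sdRel_sdMul_left (hM : ∀ m n : M, m * n = n * m)
    (z z' w : M × Subgroup.centralizer ({a} : Set P))
    (h : C.sdRel a z z') : C.sdRel a (C.sdMul a z w) (C.sdMul a z' w) := by
  obtain ⟨⟨m, hm⟩, h₂⟩ := h
  refine ⟨⟨C.act w.2 m, ?_⟩, by simp only [sdMul, h₂]⟩
  simp only [sdMul, hm, map_mul, map_inv, C.act_act_of_mem_centralizer w.2.2]
  rw [← mul_assoc, hM w.1, mul_assoc]

variable (a) in
def paEquivProd (hδ : ∀ m, C.δ m = 1) : C.Pa a ≃ M × Subgroup.centralizer ({a} : Set P) where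
  toFun x := (x.1.1, ⟨x.1.2, inv_mul_inv_mul_mul_mul_eq_one_iff.mp (hδ x.1.1 ▸ x.2).symm⟩)
  invFun z := ⟨(z.1, z.2), hδ z.1 ▸ (inv_mul_inv_mul_mul_mul_eq_one_iff.mpr z.2.2).symm⟩
  left_inv _ := rfl
  right_inv _ := rfl

theorem paEquivProd_paMul (hδ : ∀ m, C.δ m = 1) (x y : C.Pa a) :
    C.paEquivProd a hδ (C.PaMul a x y) =
      C.sdMul a (C.paEquivProd a hδ x) (C.paEquivProd a hδ y) :=
  rfl

theorem cokerRel_iff_sdRel (hδ : ∀ m, C.δ m = 1) (x y : C.Pa a) :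
    C.cokerRel a x y ↔ C.sdRel a (C.paEquivProd a hδ x) (C.paEquivProd a hδ y) := by
  simp only [cokerRel, sdRel, opP, paEquivProd, hδ, C.act_one, mul_one, Prod.ext_iff,
    Subtype.ext_iff, exists_and_right]
  exact Iff.rfl

end CrossedModule

/-- if `δ = 0` then the cokernel of `δ_a : M → P(a)` is
isomorphic to `(M/[a,M]) ⋊ C_a(P)`: there is a bijection of the two quotients
compatible with the operations induced by `P(a)` and by the semidirect product. -/
theorem coker_delta_a_iso_of_delta_zero (C : CrossedModule M P)
    (hδ : ∀ m : M, C.δ m = 1) (a : P) :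
    ∃ e : Quot (C.cokerRel a) ≃ Quot (C.sdRel a),
      ∀ (x y : C.Pa a) (z w : M × Subgroup.centralizer ({a} : Set P)),
        e (Quot.mk _ x) = Quot.mk _ z → e (Quot.mk _ y) = Quot.mk _ w →
        e (Quot.mk _ (C.PaMul a x y)) =
          Quot.mk _ (w.1 * C.act (w.2 : P) z.1, z.2 * w.2) := by
  refine ⟨Quot.congr (C.paEquivProd a hδ) (C.cokerRel_iff_sdRel hδ), fun x y z w hx hy => ?_⟩
  rw [Quot.congr_mk] at hx hy ⊢
  let mulQuot := Quot.map₂ (C.sdMul a) C.sdRel_sdMul_right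
    (C.sdRel_sdMul_left (C.mul_comm_of_delta_eq_one hδ))
  calc Quot.mk _ (C.paEquivProd a hδ (C.PaMul a x y))
      = mulQuot (Quot.mk _ (C.paEquivProd a hδ x)) (Quot.mk _ (C.paEquivProd a hδ y)) := by
        rw [C.paEquivProd_paMul]; rfl
    _ = mulQuot (Quot.mk _ z) (Quot.mk _ w) := by rw [hx, hy]
    _ = Quot.mk _ (C.sdMul a z w) := rfl
end
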